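/- Let k be a finite field of characteristic ℓ, V a finite dimensional k-vector space, and G a subgroup of GL(V). Let k^× denote the group of scalar matrices in GL(V). Then G is big if and only if k^× · G is big. -/
import Mathlib


/-!
STATEMENT 2.  `k` finite field of characteristic `ℓ`, `V` finite dimensional, `G ≤ GL(V)`,
`k^×` the subgroup of scalar matrices.  Then `G` is big iff `k^× · G` is big.
`k^× · G` is encoded as `Scalars ⊔ G` where `Scalars` is the image of `kˣ` in
`(V →ₗ[k] V)ˣ` under the algebra map.
-/

open Module

variable (k V : Type*)

section Defs
variable [Field k] [AddCommGroup V] [Module k V]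

/-- Conjugation action of `GL(V)` on `ad V = End(V)`. -/
def conjAd (g : (V →ₗ[k] V)ˣ) (f : V →ₗ[k] V) : V →ₗ[k] V :=
  (g : V →ₗ[k] V) * f * ((g⁻¹ : (V →ₗ[k] V)ˣ) : V →ₗ[k] V)

/-- The generalized eigenspace `V_{g,α}`. -/
def GenEig (g : V →ₗ[k] V) (α : k) : Submodule k V :=
  Module.End.maxGenEigenspace g α

/-- The canonical complement of `V_{g,α}`, the kernel of the projection `V ↠ V_{g,α}`. -/
noncomputable def CoGenEig (g : V →ₗ[k] V) (α : k) : Submodule k V :=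
  LinearMap.range ((g - α • 1) ^ Module.finrank k V)

/-- `W ⊆ End(V)` is stable under conjugation by elements of `G`. -/
def ConjStable (G : Subgroup (V →ₗ[k] V)ˣ) (W : Submodule k (V →ₗ[k] V)) : Prop :=
  ∀ g ∈ G, ∀ f ∈ W, conjAd k V g f ∈ W

/-- `W` is an irreducible `G`-submodule of `ad V = End(V)` (conjugation action). -/
def IsIrredAdSub (G : Subgroup (V →ₗ[k] V)ˣ) (W : Submodule k (V →ₗ[k] V)) : Prop :=
  W ≠ ⊥ ∧ ConjStable k V G W ∧
    ∀ W' ≤ W, ConjStable k V G W' → W' = ⊥ ∨ W' = W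

/-- Condition (B2): `V` is absolutely irreducible as a `G`-module. -/
def AbsIrred (G : Subgroup (V →ₗ[k] V)ˣ) : Prop :=
  (⊥ : Submodule k V) ≠ ⊤ ∧
  (∀ U : Submodule k V, (∀ g ∈ G, ∀ v ∈ U, (g : V →ₗ[k] V) v ∈ U) → U = ⊥ ∨ U = ⊤) ∧
  (∀ f : V →ₗ[k] V, (∀ g ∈ G, (g : V →ₗ[k] V) * f = f * (g : V →ₗ[k] V)) →
    ∃ c : k, f = c • 1)

/-- Condition (B3): `H¹(G, ad⁰V) = 0`, stated via 1-cocycles and 1-coboundaries for the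
conjugation action on traceless endomorphisms. -/
def H1AdZeroVanishes (G : Subgroup (V →ₗ[k] V)ˣ) : Prop :=
  ∀ c : G → (V →ₗ[k] V),
    (∀ g : G, LinearMap.trace k V (c g) = 0) →
    (∀ g h : G, c (g * h) = c g + conjAd k V (g : (V →ₗ[k] V)ˣ) (c h)) →
    ∃ f : V →ₗ[k] V, LinearMap.trace k V f = 0 ∧
      ∀ g : G, c g = conjAd k V (g : (V →ₗ[k] V)ˣ) f - f

/-- Condition (B4). -/
def B4 (G : Subgroup (V →ₗ[k] V)ˣ) : Prop :=
  ∀ W : Submodule k (V →ₗ[k] V), IsIrredAdSub k V G W →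
    ∃ g ∈ G, ∃ α : k, ∃ f ∈ W,
      Module.finrank k (GenEig k V (g : V →ₗ[k] V) α) = 1 ∧
      ∃ v ∈ GenEig k V (g : V →ₗ[k] V) α, f v ∉ CoGenEig k V (g : V →ₗ[k] V) α

end Defs

section Defs2
variable [Field k] [AddCommGroup V] [Module k V]

/-- Condition (B1): `G` has no nontrivial quotient of `ℓ`-power order. -/
def B1 (ℓ : ℕ) (G : Subgroup (V →ₗ[k] V)ˣ) : Prop :=
  ∀ (Q : Type) [Group Q] (φ : G →* Q), Function.Surjective φ → IsPGroup ℓ Q →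
    Subsingleton Q

/-- `G` is a big subgroup of `GL(V)`: conditions (B1)–(B4). -/
def IsBig (ℓ : ℕ) (G : Subgroup (V →ₗ[k] V)ˣ) : Prop :=
  B1 k V ℓ G ∧ AbsIrred k V G ∧ H1AdZeroVanishes k V G ∧ B4 k V G

end Defs2

/-- The subgroup of scalar matrices `k^× ⊆ GL(V)`. -/
def Scalars (k V : Type*) [Field k] [AddCommGroup V] [Module k V] :
    Subgroup (V →ₗ[k] V)ˣ :=
  (Units.map (algebraMap k (V →ₗ[k] V)).toMonoidHom).range

open Pointwise
set_option linter.unusedSectionVars false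

section Aux

variable {k V : Type*} [Field k] [AddCommGroup V] [Module k V]

/-- Abbreviation for the scalar unit attached to `c : kˣ`. -/
noncomputable def scalarUnit (c : kˣ) : (V →ₗ[k] V)ˣ :=
  Units.map (algebraMap k (V →ₗ[k] V)).toMonoidHom c

lemma scalarUnit_mem (c : kˣ) : (scalarUnit c : (V →ₗ[k] V)ˣ) ∈ Scalars k V := ⟨c, rfl⟩

lemma scalarUnit_coe (c : kˣ) :
    ((scalarUnit c : (V →ₗ[k] V)ˣ) : V →ₗ[k] V) = algebraMap k (V →ₗ[k] V) (c : k) := rfl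

lemma scalar_comm {s : (V →ₗ[k] V)ˣ} (hs : s ∈ Scalars k V) (f : V →ₗ[k] V) :
    (s : V →ₗ[k] V) * f = f * (s : V →ₗ[k] V) := by
  obtain ⟨c, rfl⟩ := hs
  exact Algebra.commutes (c : k) f

lemma scalar_mul_comm {s : (V →ₗ[k] V)ˣ} (hs : s ∈ Scalars k V) (x : (V →ₗ[k] V)ˣ) :
    s * x = x * s := by
  apply Units.ext
  exact scalar_comm hs (x : V →ₗ[k] V)

lemma scalars_normal : (Scalars k V).Normal := by
  constructor
  intro s hs x
  have h : x * s * x⁻¹ = s := by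
    rw [← scalar_mul_comm hs x, mul_assoc, mul_inv_cancel, mul_one]
  rwa [h]

lemma mem_scalars_sup {G : Subgroup (V →ₗ[k] V)ˣ} {x : (V →ₗ[k] V)ˣ} :
    x ∈ Scalars k V ⊔ G ↔ ∃ c : kˣ, ∃ g ∈ G, x = scalarUnit c * g := by
  haveI := scalars_normal (k := k) (V := V)
  constructor
  · intro hx
    have hx' : x ∈ (Scalars k V : Set (V →ₗ[k] V)ˣ) * (G : Set (V →ₗ[k] V)ˣ) := by
      rw [← Subgroup.normal_mul]
      exact hx
    obtain ⟨s, hs, g, hg, rfl⟩ := hx'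
    obtain ⟨c, rfl⟩ := hs
    exact ⟨c, g, hg, rfl⟩
  · rintro ⟨c, g, hg, rfl⟩
    exact mul_mem (Subgroup.mem_sup_left (scalarUnit_mem c)) (Subgroup.mem_sup_right hg)

lemma conjAd_mul (g h : (V →ₗ[k] V)ˣ) (f : V →ₗ[k] V) :
    conjAd k V (g * h) f = conjAd k V g (conjAd k V h f) := by
  simp [conjAd, mul_assoc]

lemma conjAd_one (f : V →ₗ[k] V) : conjAd k V 1 f = f := by
  simp [conjAd]

lemma conjAd_scalar {s : (V →ₗ[k] V)ˣ} (hs : s ∈ Scalars k V) (f : V →ₗ[k] V) :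
    conjAd k V s f = f := by
  obtain ⟨c, rfl⟩ := hs
  have h1 : ((Units.map (algebraMap k (V →ₗ[k] V)).toMonoidHom c)⁻¹ : (V →ₗ[k] V)ˣ)
      = Units.map (algebraMap k (V →ₗ[k] V)).toMonoidHom c⁻¹ := by
    rw [← map_inv]
  unfold conjAd
  rw [h1]
  show algebraMap k (V →ₗ[k] V) (c : k) * f * algebraMap k (V →ₗ[k] V) ((c⁻¹ : kˣ) : k) = f
  rw [Algebra.commutes, mul_assoc, ← map_mul]
  simp

lemma conjAd_scalar_mul {s : (V →ₗ[k] V)ˣ} (hs : s ∈ Scalars k V)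
    (g : (V →ₗ[k] V)ˣ) (f : V →ₗ[k] V) :
    conjAd k V (s * g) f = conjAd k V g f := by
  rw [conjAd_mul, conjAd_scalar hs]

end Aux

section Aux2

variable {k V : Type*} [Field k] [AddCommGroup V] [Module k V]
variable {ℓ : ℕ} [Fact ℓ.Prime] [Finite k] [CharP k ℓ]

include ℓ in
lemma not_dvd_card_sub_one : ¬ ℓ ∣ (Nat.card k - 1) := by
  have : Fintype k := Fintype.ofFinite k
  obtain ⟨n, hp, hn⟩ := FiniteField.card k ℓ
  rw [Nat.card_eq_fintype_card, hn]
  intro hdvd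
  have h1 : ℓ ∣ ℓ ^ (n : ℕ) := dvd_pow_self ℓ n.ne_zero
  have h2 : (1 : ℕ) ≤ ℓ ^ (n : ℕ) := Nat.one_le_pow _ _ hp.pos
  have h3 : ℓ ∣ ℓ ^ (n : ℕ) - (ℓ ^ (n : ℕ) - 1) := Nat.dvd_sub h1 hdvd
  rw [Nat.sub_sub_self h2] at h3
  exact hp.one_lt.ne' (Nat.dvd_one.mp h3)

lemma scalar_pow_card {s : (V →ₗ[k] V)ˣ} (hs : s ∈ Scalars k V) :
    s ^ (Nat.card k - 1) = 1 := by
  obtain ⟨c, rfl⟩ := hs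
  rw [← map_pow]
  have : Fintype k := Fintype.ofFinite k
  have : DecidableEq k := Classical.decEq k
  have hc : c ^ (Nat.card k - 1) = 1 := by
    rw [Nat.card_eq_fintype_card, ← Fintype.card_units (α := k), pow_card_eq_one]
  rw [hc, map_one]

include ℓ in
lemma pgroup_elt_eq_one {Q : Type*} [Group Q] (hQ : IsPGroup ℓ Q) {x : Q}
    (hx : x ^ (Nat.card k - 1) = 1) : x = 1 := by
  obtain ⟨n, hn⟩ := hQ x
  have h1 := orderOf_dvd_of_pow_eq_one hn
  have h2 := orderOf_dvd_of_pow_eq_one hx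
  have hcop : Nat.Coprime (ℓ ^ n) (Nat.card k - 1) :=
    Nat.Coprime.pow_left _
      (((Fact.out : ℓ.Prime).coprime_iff_not_dvd).mpr (not_dvd_card_sub_one (k := k)))
  have : orderOf x ∣ 1 := hcop ▸ Nat.dvd_gcd h1 h2
  exact orderOf_eq_one_iff.mp (Nat.dvd_one.mp this)

include ℓ in
lemma module_elt_eq_zero {M : Type*} [AddCommGroup M] [Module k M] {x : M}
    (hx : (Nat.card k - 1) • x = 0) : x = 0 := by
  have h : ((Nat.card k - 1 : ℕ) : k) ≠ 0 := by
    rw [Ne, CharP.cast_eq_zero_iff k ℓ]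
    exact not_dvd_card_sub_one
  rw [← Nat.cast_smul_eq_nsmul k] at hx
  exact (smul_eq_zero.mp hx).resolve_left h

variable {H : Subgroup (V →ₗ[k] V)ˣ}

include ℓ in
lemma hom_scalar_eq_one {Q : Type*} [Group Q] (hQ : IsPGroup ℓ Q) (φ : H →* Q) {s : H}
    (hs : (s : (V →ₗ[k] V)ˣ) ∈ Scalars k V) : φ s = 1 := by
  apply pgroup_elt_eq_one (k := k) hQ
  have h1 : s ^ (Nat.card k - 1) = 1 := by
    apply Subtype.ext
    push_cast
    exact scalar_pow_card hs
  rw [← map_pow, h1, map_one]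

lemma cocycle_one (c : H → (V →ₗ[k] V))
    (hc : ∀ g h : H, c (g * h) = c g + conjAd k V (g : (V →ₗ[k] V)ˣ) (c h)) :
    c 1 = 0 := by
  have h := hc 1 1
  rw [mul_one] at h
  have h1 : conjAd k V ((1 : H) : (V →ₗ[k] V)ˣ) (c 1) = c 1 := by
    rw [OneMemClass.coe_one, conjAd_one]
  rw [h1] at h
  exact (left_eq_add.mp h)

lemma cocycle_pow (c : H → (V →ₗ[k] V))
    (hc : ∀ g h : H, c (g * h) = c g + conjAd k V (g : (V →ₗ[k] V)ˣ) (c h))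
    {s : H} (hs : (s : (V →ₗ[k] V)ˣ) ∈ Scalars k V) (n : ℕ) :
    c (s ^ n) = n • c s := by
  induction n with
  | zero => simpa using cocycle_one c hc
  | succ n ih =>
    have hsn : ((s ^ n : H) : (V →ₗ[k] V)ˣ) ∈ Scalars k V := by
      push_cast
      exact pow_mem hs n
    have h := hc (s ^ n) s
    rw [← pow_succ, conjAd_scalar hsn] at h
    rw [h, ih, succ_nsmul]

include ℓ in
lemma cocycle_scalar_eq_zero (c : H → (V →ₗ[k] V))
    (hc : ∀ g h : H, c (g * h) = c g + conjAd k V (g : (V →ₗ[k] V)ˣ) (c h))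
    {s : H} (hs : (s : (V →ₗ[k] V)ˣ) ∈ Scalars k V) : c s = 0 := by
  apply module_elt_eq_zero (k := k) (ℓ := ℓ)
  rw [← cocycle_pow c hc hs]
  have h1 : s ^ (Nat.card k - 1) = 1 := by
    apply Subtype.ext
    push_cast
    exact scalar_pow_card hs
  rw [h1, cocycle_one c hc]

end Aux2

section Aux3

variable {k V : Type*} [Field k] [AddCommGroup V] [Module k V]
variable {G : Subgroup (V →ₗ[k] V)ˣ}

/-- A choice of "G-part" for an element of `Scalars ⊔ G`. -/
noncomputable def gPart (x : ↥(Scalars k V ⊔ G)) : G :=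
  ⟨(mem_scalars_sup.mp x.2).choose_spec.choose,
    (mem_scalars_sup.mp x.2).choose_spec.choose_spec.1⟩

lemma gPart_spec (x : ↥(Scalars k V ⊔ G)) :
    ∃ c : kˣ, (x : (V →ₗ[k] V)ˣ) = scalarUnit c * (gPart x : (V →ₗ[k] V)ˣ) :=
  ⟨(mem_scalars_sup.mp x.2).choose, (mem_scalars_sup.mp x.2).choose_spec.choose_spec.2⟩

/-- Any two decompositions differ by a scalar in `G`. -/
lemma gPart_rel {x : ↥(Scalars k V ⊔ G)} {g : G} {c : kˣ}
    (hx : (x : (V →ₗ[k] V)ˣ) = scalarUnit c * (g : (V →ₗ[k] V)ˣ)) :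
    ∃ s : G, ((s : (V →ₗ[k] V)ˣ) ∈ Scalars k V) ∧ g = s * gPart x := by
  obtain ⟨c₀, hc₀⟩ := gPart_spec x
  refine ⟨g * (gPart x)⁻¹, ?_, by group⟩
  have h : (g : (V →ₗ[k] V)ˣ) * ((gPart x : (V →ₗ[k] V)ˣ))⁻¹
      = (scalarUnit c)⁻¹ * scalarUnit c₀ := by
    have := hx.symm.trans hc₀
    calc (g : (V →ₗ[k] V)ˣ) * ((gPart x : (V →ₗ[k] V)ˣ))⁻¹
        = (scalarUnit c)⁻¹ * (scalarUnit c * (g : (V →ₗ[k] V)ˣ)) *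
            ((gPart x : (V →ₗ[k] V)ˣ))⁻¹ := by group
      _ = (scalarUnit c)⁻¹ * (scalarUnit c₀ * (gPart x : (V →ₗ[k] V)ˣ)) *
            ((gPart x : (V →ₗ[k] V)ˣ))⁻¹ := by rw [this]
      _ = (scalarUnit c)⁻¹ * scalarUnit c₀ := by group
  have hcoe : ((g * (gPart x)⁻¹ : G) : (V →ₗ[k] V)ˣ)
      = (g : (V →ₗ[k] V)ˣ) * ((gPart x : (V →ₗ[k] V)ˣ))⁻¹ := by push_cast; ring_nf
  rw [hcoe, h]
  exact mul_mem (inv_mem (scalarUnit_mem c)) (scalarUnit_mem c₀)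

lemma coe_scalar_mul (c : kˣ) (g : (V →ₗ[k] V)ˣ) :
    ((scalarUnit c * g : (V →ₗ[k] V)ˣ) : V →ₗ[k] V) = (c : k) • (g : V →ₗ[k] V) := by
  show algebraMap k (V →ₗ[k] V) (c : k) * (g : V →ₗ[k] V) = _
  rw [Algebra.algebraMap_eq_smul_one, smul_mul_assoc, one_mul]

lemma smul_sub_key (c : kˣ) (g : V →ₗ[k] V) (α : k) :
    (c : k) • g - α • 1 = (c : k) • (g - (((c⁻¹ : kˣ) : k) * α) • 1) := by
  rw [smul_sub, smul_smul, ← mul_assoc, Units.mul_inv, one_mul]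

lemma genEig_unit_smul (c : kˣ) (g : V →ₗ[k] V) (α : k) :
    GenEig k V ((c : k) • g) α = GenEig k V g (((c⁻¹ : kˣ) : k) * α) := by
  ext v
  simp only [GenEig, Module.End.mem_maxGenEigenspace]
  have hpow : ∀ n : ℕ, (((c : k) • g - α • 1) ^ n) v
      = (c : k) ^ n • (((g - (((c⁻¹ : kˣ) : k) * α) • 1) ^ n) v) := by
    intro n
    rw [smul_sub_key, smul_pow]
    simp
  constructor <;> rintro ⟨n, hn⟩ <;> refine ⟨n, ?_⟩
  · rw [hpow n] at hn
    exact (smul_eq_zero.mp hn).resolve_left (pow_ne_zero n c.ne_zero)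
  · rw [hpow n, hn, smul_zero]

lemma coGenEig_unit_smul [FiniteDimensional k V] (c : kˣ) (g : V →ₗ[k] V) (α : k) :
    CoGenEig k V ((c : k) • g) α = CoGenEig k V g (((c⁻¹ : kˣ) : k) * α) := by
  unfold CoGenEig
  rw [smul_sub_key, smul_pow]
  exact LinearMap.range_smul _ _ (pow_ne_zero _ c.ne_zero)

end Aux3

section Aux4

variable {k V : Type*} [Field k] [AddCommGroup V] [Module k V]
variable (G : Subgroup (V →ₗ[k] V)ˣ)

lemma scalarUnit_one : (scalarUnit 1 : (V →ₗ[k] V)ˣ) = 1 := by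
  unfold scalarUnit; exact map_one _

lemma scalar_decomp_mul (a b : kˣ) (g h : (V →ₗ[k] V)ˣ) :
    (scalarUnit a * g) * (scalarUnit b * h) = scalarUnit (a * b) * (g * h) := by
  have h1 : (scalarUnit (a * b) : (V →ₗ[k] V)ˣ) = scalarUnit a * scalarUnit b := by
    unfold scalarUnit; exact map_mul _ _ _
  rw [h1, mul_assoc, mul_assoc, ← mul_assoc g, ← scalar_mul_comm (scalarUnit_mem b) g,
    mul_assoc]

lemma conjStable_sup_iff {W : Submodule k (V →ₗ[k] V)} :
    ConjStable k V (Scalars k V ⊔ G) W ↔ ConjStable k V G W := by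
  constructor
  · intro h g hg f hf
    exact h g (Subgroup.mem_sup_right hg) f hf
  · intro h x hx f hf
    obtain ⟨c, g, hg, rfl⟩ := mem_scalars_sup.mp hx
    rw [conjAd_scalar_mul (scalarUnit_mem c)]
    exact h g hg f hf

lemma isIrredAdSub_sup_iff {W : Submodule k (V →ₗ[k] V)} :
    IsIrredAdSub k V (Scalars k V ⊔ G) W ↔ IsIrredAdSub k V G W := by
  unfold IsIrredAdSub
  simp only [conjStable_sup_iff]

lemma absIrred_sup_iff : AbsIrred k V (Scalars k V ⊔ G) ↔ AbsIrred k V G := by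
  unfold AbsIrred
  refine and_congr Iff.rfl (and_congr ?_ ?_)
  · constructor
    · intro h U hU
      apply h U
      intro x hx v hv
      obtain ⟨c, g, hg, rfl⟩ := mem_scalars_sup.mp hx
      rw [coe_scalar_mul, LinearMap.smul_apply]
      exact U.smul_mem _ (hU g hg v hv)
    · intro h U hU
      apply h U
      intro g hg v hv
      exact hU g (Subgroup.mem_sup_right hg) v hv
  · constructor
    · intro h f hf
      apply h f
      intro x hx
      obtain ⟨c, g, hg, rfl⟩ := mem_scalars_sup.mp hx
      rw [coe_scalar_mul, smul_mul_assoc, mul_smul_comm, hf g hg]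
    · intro h f hf
      apply h f
      intro g hg
      exact hf g (Subgroup.mem_sup_right hg)

variable {ℓ : ℕ} [Fact ℓ.Prime] [Finite k] [CharP k ℓ]

include ℓ in
lemma b1_sup_iff : B1 k V ℓ (Scalars k V ⊔ G) ↔ B1 k V ℓ G := by
  constructor
  · -- from sup to G: extend the homomorphism
    intro hH Q _ φ hφ pQ
    have hkill : ∀ s : G, ((s : (V →ₗ[k] V)ˣ) ∈ Scalars k V) → φ s = 1 :=
      fun s hs => hom_scalar_eq_one pQ φ hs
    let ψfun : ↥(Scalars k V ⊔ G) → Q := fun x => φ (gPart x)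
    have keyeq : ∀ (x : ↥(Scalars k V ⊔ G)) (g : G) (cu : kˣ),
        (x : (V →ₗ[k] V)ˣ) = scalarUnit cu * (g : (V →ₗ[k] V)ˣ) → ψfun x = φ g := by
      intro x g cu hx
      obtain ⟨s, hsS, rfl⟩ := gPart_rel hx
      rw [map_mul, hkill s hsS, one_mul]
    have hmul : ∀ x y, ψfun (x * y) = ψfun x * ψfun y := by
      intro x y
      obtain ⟨a, ha⟩ := gPart_spec x
      obtain ⟨b, hb⟩ := gPart_spec y
      have hxy : ((x * y : ↥(Scalars k V ⊔ G)) : (V →ₗ[k] V)ˣ)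
          = scalarUnit (a * b) * ((gPart x * gPart y : G) : (V →ₗ[k] V)ˣ) := by
        show ((x : (V →ₗ[k] V)ˣ) * (y : (V →ₗ[k] V)ˣ)) = _
        rw [ha, hb, scalar_decomp_mul]
        rfl
      rw [keyeq (x * y) _ _ hxy, map_mul]
    have hone : ψfun 1 = 1 := by
      have h1 : ((1 : ↥(Scalars k V ⊔ G)) : (V →ₗ[k] V)ˣ)
          = scalarUnit 1 * ((1 : G) : (V →ₗ[k] V)ˣ) := by
        rw [scalarUnit_one, one_mul]
        rfl
      rw [keyeq 1 1 1 h1, map_one]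
    let ψ : ↥(Scalars k V ⊔ G) →* Q := ⟨⟨ψfun, hone⟩, hmul⟩
    have hsurj : Function.Surjective ψ := by
      intro q
      obtain ⟨g, rfl⟩ := hφ q
      exact ⟨⟨(g : (V →ₗ[k] V)ˣ), Subgroup.mem_sup_right g.2⟩,
        keyeq _ g 1 (by rw [scalarUnit_one, one_mul])⟩
    exact hH Q ψ hsurj pQ
  · -- from G to sup: restrict the homomorphism
    intro hG Q _ φ hφ pQ
    let φ' : G →* Q := φ.comp (Subgroup.inclusion le_sup_right)
    have hsurj : Function.Surjective φ' := by
      intro q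
      obtain ⟨x, rfl⟩ := hφ q
      obtain ⟨cu, g, hg, hx⟩ := mem_scalars_sup.mp x.2
      refine ⟨⟨g, hg⟩, ?_⟩
      have hxe : x = (⟨scalarUnit cu, Subgroup.mem_sup_left (scalarUnit_mem cu)⟩ :
          ↥(Scalars k V ⊔ G)) * ⟨g, Subgroup.mem_sup_right hg⟩ := Subtype.ext hx
      rw [hxe, map_mul,
        hom_scalar_eq_one pQ φ (s := ⟨scalarUnit cu, _⟩) (scalarUnit_mem cu), one_mul]
      rfl
    exact hG Q φ' hsurj pQ

include ℓ in
lemma h1_sup_iff : H1AdZeroVanishes k V (Scalars k V ⊔ G) ↔ H1AdZeroVanishes k V G := by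
  constructor
  · -- from sup to G: extend the cocycle
    intro h c htr hc
    let ct : ↥(Scalars k V ⊔ G) → (V →ₗ[k] V) := fun x => c (gPart x)
    have keyeq : ∀ (x : ↥(Scalars k V ⊔ G)) (g : G) (cu : kˣ),
        (x : (V →ₗ[k] V)ˣ) = scalarUnit cu * (g : (V →ₗ[k] V)ˣ) → ct x = c g := by
      intro x g cu hx
      obtain ⟨s, hsS, rfl⟩ := gPart_rel hx
      rw [hc s (gPart x), cocycle_scalar_eq_zero (ℓ := ℓ) c hc hsS, conjAd_scalar hsS, zero_add]
    have hcoc : ∀ x y : ↥(Scalars k V ⊔ G),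
        ct (x * y) = ct x + conjAd k V (x : (V →ₗ[k] V)ˣ) (ct y) := by
      intro x y
      obtain ⟨a, ha⟩ := gPart_spec x
      obtain ⟨b, hb⟩ := gPart_spec y
      have hxy : ((x * y : ↥(Scalars k V ⊔ G)) : (V →ₗ[k] V)ˣ)
          = scalarUnit (a * b) * ((gPart x * gPart y : G) : (V →ₗ[k] V)ˣ) := by
        show ((x : (V →ₗ[k] V)ˣ) * (y : (V →ₗ[k] V)ˣ)) = _
        rw [ha, hb, scalar_decomp_mul]
        rfl
      rw [keyeq (x * y) _ _ hxy, hc (gPart x) (gPart y)]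
      show c (gPart x) + conjAd k V ((gPart x : G) : (V →ₗ[k] V)ˣ) (c (gPart y))
        = ct x + conjAd k V (x : (V →ₗ[k] V)ˣ) (ct y)
      rw [ha, conjAd_scalar_mul (scalarUnit_mem a)]
    obtain ⟨f, hf0, hfb⟩ := h ct (fun x => htr (gPart x)) hcoc
    refine ⟨f, hf0, fun g => ?_⟩
    have h1 := hfb ⟨(g : (V →ₗ[k] V)ˣ), Subgroup.mem_sup_right g.2⟩
    rwa [keyeq _ g 1 (by rw [scalarUnit_one, one_mul])] at h1
  · -- from G to sup: restrict the cocycle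
    intro hG c htr hc
    let ι : G →* ↥(Scalars k V ⊔ G) := Subgroup.inclusion le_sup_right
    obtain ⟨f, hf0, hfb⟩ := hG (fun g => c (ι g)) (fun g => htr (ι g))
      (fun g h => by have := hc (ι g) (ι h); rw [← map_mul] at this; exact this)
    refine ⟨f, hf0, fun x => ?_⟩
    obtain ⟨cu, g, hg, hx⟩ := mem_scalars_sup.mp x.2
    set σ : ↥(Scalars k V ⊔ G) := ⟨scalarUnit cu, Subgroup.mem_sup_left (scalarUnit_mem cu)⟩
    set γ : ↥(Scalars k V ⊔ G) := ⟨g, Subgroup.mem_sup_right hg⟩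
    have hxe : x = σ * γ := Subtype.ext hx
    have hσ : c σ = 0 := cocycle_scalar_eq_zero (ℓ := ℓ) c hc (scalarUnit_mem cu)
    rw [hxe, hc σ γ, hσ, zero_add, conjAd_scalar (scalarUnit_mem cu)]
    have h2 : conjAd k V ((σ * γ : ↥(Scalars k V ⊔ G)) : (V →ₗ[k] V)ˣ) f
        = conjAd k V (g : (V →ₗ[k] V)ˣ) f :=
      conjAd_scalar_mul (scalarUnit_mem cu) g f
    rw [h2]
    exact hfb ⟨g, hg⟩
  
lemma b4_sup_iff [FiniteDimensional k V] :
    B4 k V (Scalars k V ⊔ G) ↔ B4 k V G := by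
  constructor
  · intro h W hW
    obtain ⟨x, hx, α, f, hf, hrank, v, hv, hfv⟩ := h W ((isIrredAdSub_sup_iff G).mpr hW)
    obtain ⟨cu, g, hg, rfl⟩ := mem_scalars_sup.mp hx
    have hGe : GenEig k V ((scalarUnit cu * g : (V →ₗ[k] V)ˣ) : V →ₗ[k] V) α
        = GenEig k V (g : V →ₗ[k] V) (((cu⁻¹ : kˣ) : k) * α) := by
      rw [coe_scalar_mul, genEig_unit_smul]
    have hCo : CoGenEig k V ((scalarUnit cu * g : (V →ₗ[k] V)ˣ) : V →ₗ[k] V) α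
        = CoGenEig k V (g : V →ₗ[k] V) (((cu⁻¹ : kˣ) : k) * α) := by
      rw [coe_scalar_mul, coGenEig_unit_smul]
    refine ⟨g, hg, ((cu⁻¹ : kˣ) : k) * α, f, hf, ?_, v, ?_, ?_⟩
    · rw [← hGe]; exact hrank
    · rw [← hGe]; exact hv
    · rw [← hCo]; exact hfv
  · intro h W hW
    obtain ⟨g, hg, α, f, hf, hrank, v, hv, hfv⟩ := h W ((isIrredAdSub_sup_iff G).mp hW)
    exact ⟨g, Subgroup.mem_sup_right hg, α, f, hf, hrank, v, hv, hfv⟩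

end Aux4

theorem stmt2 {ℓ : ℕ} [Fact ℓ.Prime]
    [Field k] [Finite k] [CharP k ℓ]
    [AddCommGroup V] [Module k V] [FiniteDimensional k V]
    (G : Subgroup (V →ₗ[k] V)ˣ) :
    IsBig k V ℓ G ↔ IsBig k V ℓ (Scalars k V ⊔ G) := by
  unfold IsBig
  rw [b1_sup_iff G, absIrred_sup_iff G, h1_sup_iff (ℓ := ℓ) G, b4_sup_iff G]
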